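/- A signed graph Σ on m vertices is balanced if and only if D^max(Σ) = D^min(Σ) and the adjacency matrix of the associated signed complete graph K^{D^±}(Σ) has spectrum consisting of the eigenvalue m−1 with multiplicity 1 and the eigenvalue −1 with multiplicity m−1. -/

import Mathlib

open SimpleGraph Polynomial

variable {V : Type*}

/-- The sign of a walk: the product of the signs of its edges. -/
def walkSign {G : SimpleGraph V} (sg : V → V → ℤ) {u v : V} (p : G.Walk u v) : ℤ :=
  (p.darts.map fun d => sg d.toProd.1 d.toProd.2).prod

/-- `sigmaMax G sg u v`: the maximum sign over all shortest `u`–`v` paths. -/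
noncomputable def sigmaMax (G : SimpleGraph V) (sg : V → V → ℤ) (u v : V) : ℤ := by
  classical
  exact if ∃ p : G.Walk u v, p.length = G.dist u v ∧ walkSign sg p = 1 then 1 else -1

/-- `sigmaMin G sg u v`: the minimum sign over all shortest `u`–`v` paths. -/
noncomputable def sigmaMin (G : SimpleGraph V) (sg : V → V → ℤ) (u v : V) : ℤ := by
  classical
  exact if ∃ p : G.Walk u v, p.length = G.dist u v ∧ walkSign sg p = -1 then -1 else 1

/-- `u` and `v` are distance-compatible: all shortest `u`–`v` paths have the same sign. -/
def pairCompatible (G : SimpleGraph V) (sg : V → V → ℤ) (u v : V) : Prop :=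
  ∀ p q : G.Walk u v, p.length = G.dist u v → q.length = G.dist u v →
    walkSign sg p = walkSign sg q

/-- The `n`-th power graph: `u ~ v` iff `u ≠ v` and `d(u,v) ≤ n`. -/
def powerGraph (G : SimpleGraph V) (n : ℕ) : SimpleGraph V where
  Adj u v := u ≠ v ∧ G.dist u v ≤ n
  symm := by
    constructor
    intro u v h
    exact ⟨h.1.symm, by rw [SimpleGraph.dist_comm]; exact h.2⟩
  loopless := by
    constructor
    intro u h
    exact h.1 rfl

/-- A signed graph is balanced if every cycle has positive sign. -/
def SBalanced (G : SimpleGraph V) (sg : V → V → ℤ) : Prop :=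
  ∀ ⦃u : V⦄ (p : G.Walk u u), p.IsCycle → walkSign sg p = 1

/-- 2-connectedness: at least 3 vertices and deleting any vertex leaves a connected graph. -/
def TwoConnected [Fintype V] (G : SimpleGraph V) : Prop :=
  3 ≤ Fintype.card V ∧ ∀ v : V, ((⊤ : G.Subgraph).deleteVerts {v}).coe.Connected

/-- Signature of the associated signed complete graph `K^{D^max}(Σ)`:
edges of `G` keep their sign, non-adjacent pairs get `sigmaMax`. -/
noncomputable def kSigMax (G : SimpleGraph V) (sg : V → V → ℤ) (u v : V) : ℤ := by
  classical
  exact if G.Adj u v then sg u v else sigmaMax G sg u v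

/-- Signature of the associated signed complete graph `K^{D^min}(Σ)`. -/
noncomputable def kSigMin (G : SimpleGraph V) (sg : V → V → ℤ) (u v : V) : ℤ := by
  classical
  exact if G.Adj u v then sg u v else sigmaMin G sg u v

/-!
A balanced signed graph is switching equivalent to the all-positive one: there is
`θ : V → {±1}` with `σ(p) = θ u * θ v` for every `u`–`v` walk `p`. Indeed a closed walk has
sign `1`, because each step of `Walk.bypass` cuts off a closed subwalk that is a cycle or runs
back and forth along one edge. Hence all shortest `u`–`v` paths have the sign `θ u * θ v`, and
the adjacency matrix of `K^{D^±}(Σ)` is `θθᵀ - 1`, with spectrum `m - 1, (-1)^{m-1}`.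

Conversely, let `A` be the (symmetric, real) adjacency matrix of `K^{D^max}(Σ)` with this
characteristic polynomial. By Cayley–Hamilton `B = (A - (m-1)) (A + 1)` is nilpotent, and being
symmetric it vanishes. An off-diagonal entry of `B = 0` says that the `m - 2` signs
`A x w * A w y` add up to `(m - 2) * A x y`, so every triangle of `K^{D^max}(Σ)` is positive.
Then `θ = A u₀` (with `θ u₀ = 1`) switches `K^{D^max}(Σ)`, hence `Σ`, to all-positive.
-/

section WalkSign

variable {G : SimpleGraph V} {sg : V → V → ℤ}

@[simp]
theorem walkSign_nil {u : V} : walkSign sg (Walk.nil : G.Walk u u) = 1 := rfl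

@[simp]
theorem walkSign_cons {u v w : V} (h : G.Adj u v) (p : G.Walk v w) :
    walkSign sg (Walk.cons h p) = sg u v * walkSign sg p := by
  simp [walkSign]

theorem walkSign_append {u v w : V} (p : G.Walk u v) (q : G.Walk v w) :
    walkSign sg (p.append q) = walkSign sg p * walkSign sg q := by
  simp [walkSign, Walk.darts_append]

theorem walkSign_reverse (hsym : ∀ u v, sg u v = sg v u) {u v : V} (p : G.Walk u v) :
    walkSign sg p.reverse = walkSign sg p := by
  simp only [walkSign, Walk.darts_reverse, List.map_reverse, List.prod_reverse, List.map_map]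
  exact congrArg List.prod (List.map_congr_left fun d _ => hsym _ _)

theorem isUnit_walkSign (hval : ∀ u v, G.Adj u v → IsUnit (sg u v)) {u v : V}
    (p : G.Walk u v) : IsUnit (walkSign sg p) :=
  List.prod_isUnit fun _ hd => by
    obtain ⟨d, hd, rfl⟩ := List.mem_map.1 hd
    exact hval _ _ d.adj

theorem walkSign_eq_mul_of_forall_adj {θ : V → ℤ} (hθ : ∀ x, θ x * θ x = 1)
    (hsg : ∀ x y, G.Adj x y → sg x y = θ x * θ y) {u v : V} (p : G.Walk u v) :
    walkSign sg p = θ u * θ v := by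
  induction p with
  | nil => exact (hθ _).symm
  | @cons a b c h q ih =>
    rw [walkSign_cons, ih, hsg _ _ h]
    linear_combination θ a * θ c * hθ b

end WalkSign

namespace SBalanced

variable {G : SimpleGraph V} {sg : V → V → ℤ} (hb : SBalanced G sg)
  (hsym : ∀ u v, sg u v = sg v u) (hval : ∀ u v, G.Adj u v → IsUnit (sg u v))
include hb hsym hval

theorem mul_walkSign_eq_one_of_isPath {u v : V} (h : G.Adj u v) {q : G.Walk v u} (hq : q.IsPath) :
    sg u v * walkSign sg q = 1 := by
  rcases q with _ | ⟨h₁, _ | ⟨h₂, r⟩⟩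
  · exact absurd rfl h.ne
  · simpa [hsym v u] using Int.isUnit_mul_self (hval u v h)
  · simpa using hb (Walk.cons h (Walk.cons h₁ (Walk.cons h₂ r)))
      (Walk.isCycle_iff_isPath_tail_and_le_length.2 ⟨by simpa using hq, by simp⟩)

theorem walkSign_bypass [DecidableEq V] {u v : V} (p : G.Walk u v) :
    walkSign sg p.bypass = walkSign sg p := by
  induction p with
  | nil => rfl
  | cons h p ih =>
    rw [Walk.bypass]
    split_ifs with hs
    · have hsplit := congrArg (walkSign sg) (p.bypass.take_spec hs)
      rw [walkSign_append] at hsplit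
      rw [walkSign_cons, ← ih, ← hsplit, ← mul_assoc,
        hb.mul_walkSign_eq_one_of_isPath hsym hval h ((p.bypass_isPath).takeUntil hs), one_mul]
    · rw [walkSign_cons, walkSign_cons, ih]

theorem walkSign_eq_one {u : V} (p : G.Walk u u) : walkSign sg p = 1 := by
  classical
  rw [← hb.walkSign_bypass hsym hval, (Walk.isPath_iff_nil.1 p.bypass_isPath).eq_nil,
    walkSign_nil]

theorem exists_switching (hconn : G.Connected) :
    ∃ θ : V → ℤ, (∀ x, θ x * θ x = 1) ∧
      ∀ {u v : V} (p : G.Walk u v), walkSign sg p = θ u * θ v := by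
  obtain ⟨v₀⟩ := hconn.nonempty
  let P : ∀ v : V, G.Walk v₀ v := fun v => (hconn.preconnected v₀ v).some
  refine ⟨fun v => walkSign sg (P v), fun x => Int.isUnit_mul_self (isUnit_walkSign hval _),
    fun {u v} p => ?_⟩
  have hloop := hb.walkSign_eq_one hsym hval ((P u).append (p.append (P v).reverse))
  rw [walkSign_append, walkSign_append, walkSign_reverse hsym] at hloop
  have hu := Int.isUnit_mul_self (isUnit_walkSign hval (P u))
  have hv := Int.isUnit_mul_self (isUnit_walkSign hval (P v))
  linear_combination (-walkSign sg p * walkSign sg (P u) * walkSign sg (P u)) * hv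
    - walkSign sg p * hu + walkSign sg (P u) * walkSign sg (P v) * hloop

end SBalanced

section ShortestPathSigns

variable {G : SimpleGraph V} {sg : V → V → ℤ}

theorem sigmaMax_eq_of_forall_walkSign_eq {u v : V} (hr : G.Reachable u v) {s : ℤ}
    (hs : IsUnit s) (h : ∀ p : G.Walk u v, p.length = G.dist u v → walkSign sg p = s) :
    sigmaMax G sg u v = s := by
  rw [sigmaMax]
  split_ifs with hex
  · obtain ⟨q, hq, hq1⟩ := hex
    rw [← h q hq, hq1]
  · obtain ⟨p, hp⟩ := hr.exists_walk_length_eq_dist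
    rcases Int.isUnit_iff.1 hs with rfl | rfl
    · exact absurd ⟨p, hp, h p hp⟩ hex
    · rfl

theorem sigmaMin_eq_of_forall_walkSign_eq {u v : V} (hr : G.Reachable u v) {s : ℤ}
    (hs : IsUnit s) (h : ∀ p : G.Walk u v, p.length = G.dist u v → walkSign sg p = s) :
    sigmaMin G sg u v = s := by
  rw [sigmaMin]
  split_ifs with hex
  · obtain ⟨q, hq, hq1⟩ := hex
    rw [← h q hq, hq1]
  · obtain ⟨p, hp⟩ := hr.exists_walk_length_eq_dist
    rcases Int.isUnit_iff.1 hs with rfl | rfl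
    · rfl
    · exact absurd ⟨p, hp, h p hp⟩ hex

theorem sigmaMax_comm (hsym : ∀ u v, sg u v = sg v u) (u v : V) :
    sigmaMax G sg u v = sigmaMax G sg v u := by
  have key : ∀ a b : V, (∃ p : G.Walk a b, p.length = G.dist a b ∧ walkSign sg p = 1) →
      ∃ p : G.Walk b a, p.length = G.dist b a ∧ walkSign sg p = 1 :=
    fun a b ⟨p, hp, hp1⟩ => ⟨p.reverse, by rw [Walk.length_reverse, hp, dist_comm],
      by rw [walkSign_reverse hsym, hp1]⟩
  rw [sigmaMax, sigmaMax]
  congr 1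
  exact propext ⟨key u v, key v u⟩

theorem kSigMax_comm (hsym : ∀ u v, sg u v = sg v u) (u v : V) :
    kSigMax G sg u v = kSigMax G sg v u := by
  by_cases h : G.Adj u v
  · simp [kSigMax, h, h.symm, hsym u v]
  · have h' : ¬G.Adj v u := fun h' => h h'.symm
    simp [kSigMax, h, h', sigmaMax_comm hsym u v]

theorem isUnit_kSigMax (hval : ∀ u v, G.Adj u v → IsUnit (sg u v)) (u v : V) :
    IsUnit (kSigMax G sg u v) := by
  rw [kSigMax, sigmaMax]
  split_ifs with h
  exacts [hval u v h, isUnit_one, isUnit_one.neg]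

theorem kSigMax_eq_mul_of_forall_walkSign_eq (hconn : G.Connected) {θ : V → ℤ}
    (hθ : ∀ x, θ x * θ x = 1)
    (hwalk : ∀ {u v : V} (p : G.Walk u v), walkSign sg p = θ u * θ v) (u v : V) :
    kSigMax G sg u v = θ u * θ v := by
  rw [kSigMax]
  split_ifs with h
  · simpa using hwalk (Walk.cons h Walk.nil)
  · exact sigmaMax_eq_of_forall_walkSign_eq (hconn u v)
      ((IsUnit.of_mul_eq_one _ (hθ u)).mul (IsUnit.of_mul_eq_one _ (hθ v)))
      fun p _ => hwalk p

theorem SBalanced.sigmaMax_eq_sigmaMin (hb : SBalanced G sg) (hconn : G.Connected)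
    (hsym : ∀ u v, sg u v = sg v u) (hval : ∀ u v, G.Adj u v → IsUnit (sg u v)) (u v : V) :
    sigmaMax G sg u v = sigmaMin G sg u v := by
  obtain ⟨θ, hθ, hwalk⟩ := hb.exists_switching hsym hval hconn
  have hs : IsUnit (θ u * θ v) :=
    (IsUnit.of_mul_eq_one _ (hθ u)).mul (IsUnit.of_mul_eq_one _ (hθ v))
  rw [sigmaMax_eq_of_forall_walkSign_eq (hconn u v) hs fun p _ => hwalk p,
    sigmaMin_eq_of_forall_walkSign_eq (hconn u v) hs fun p _ => hwalk p]

end ShortestPathSigns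

theorem exists_switching_of_triangle {R : Type*} [CommRing R] [Nonempty V] {s : V → V → R}
    (hsymm : ∀ x y, s x y = s y x) (hsq : ∀ x y, x ≠ y → s x y * s x y = 1)
    (htri : ∀ x y w, x ≠ y → w ≠ x → w ≠ y → s x w * s w y = s x y) :
    ∃ θ : V → R, (∀ x, θ x * θ x = 1) ∧ ∀ x y, x ≠ y → s x y = θ x * θ y := by
  classical
  obtain ⟨u₀⟩ := ‹Nonempty V›
  refine ⟨Function.update (s u₀) u₀ 1, fun x => ?_, fun x y hxy => ?_⟩
  · rcases eq_or_ne x u₀ with rfl | hx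
    · simp
    · simpa [hx] using hsq u₀ x hx.symm
  · rcases eq_or_ne x u₀ with rfl | hx
    · simp [hxy.symm]
    rcases eq_or_ne y u₀ with rfl | hy
    · simp [hx, hsymm x]
    · simp [hx, hy, ← htri x y u₀ hxy hx.symm hy.symm, hsymm x u₀]


namespace Matrix

open Finset

variable {n R : Type*} [Fintype n] [DecidableEq n]

theorem charpoly_vecMulVec_sub_one [CommRing R] [Nonempty n] (u v : n → R) :
    (vecMulVec u v - 1).charpoly =
      (X - C (u ⬝ᵥ v - 1)) * (X + C 1) ^ (Fintype.card n - 1) := by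
  obtain ⟨N, hN⟩ : ∃ N, Fintype.card n = N + 1 := Nat.exists_eq_add_one.2 Fintype.card_pos
  rw [← (scalar n).map_one, charpoly_sub_scalar, charpoly_vecMulVec, sub_comp, smul_comp,
    X_pow_comp, X_pow_comp, hN, Nat.add_sub_cancel, pow_succ, smul_eq_C_mul, map_sub, map_one]
  ring

theorem IsHermitian.eq_zero_of_pow_eq_zero [CommRing R] [PartialOrder R] [StarRing R]
    [StarOrderedRing R] [NoZeroDivisors R] {A : Matrix n n R} (hA : A.IsHermitian) {k : ℕ}
    (hk : A ^ k = 0) : A = 0 := by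
  induction k using Nat.strong_induction_on with
  | _ k ih =>
    rcases k with _ | _ | k
    · exact (subsingleton_of_zero_eq_one (hk.symm.trans (pow_zero A))).elim _ _
    · simpa using hk
    · refine ih ((k + 3) / 2) (by omega) ?_
      rw [← conjTranspose_mul_self_eq_zero, (hA.pow _).eq, ← pow_add,
        ← Nat.sub_add_cancel (show k + 2 ≤ (k + 3) / 2 + (k + 3) / 2 by omega), pow_add, hk,
        mul_zero]

theorem IsHermitian.sub_scalar_mul_sub_scalar_eq_zero [CommRing R] [PartialOrder R] [StarRing R]
    [StarOrderedRing R] [NoZeroDivisors R] {A : Matrix n n R} (hA : A.IsHermitian) {a b : R}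
    (ha : IsSelfAdjoint a) (hb : IsSelfAdjoint b) {k : ℕ}
    (hchar : A.charpoly = (X - C a) * (X - C b) ^ k) :
    (A - scalar n a) * (A - scalar n b) = 0 := by
  have hcomm : Commute (A - scalar n a) (A - scalar n b) :=
    ((Commute.refl A).sub_right (scalar_commute b (Commute.all b) A).symm).sub_left
      (scalar_commute a (Commute.all a) _)
  have hCH : (A - scalar n a) * (A - scalar n b) ^ k = 0 := by
    have h := aeval_self_charpoly A
    simp only [hchar, map_mul, map_pow, map_sub, aeval_X, aeval_C] at h
    exact h
  refine IsHermitian.eq_zero_of_pow_eq_zero ?_ (k := k + 1) ?_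
  · exact ((IsSelfAdjoint.commute_iff (hA.sub (isHermitian_diagonal_iff.2 fun _ => ha))
      (hA.sub (isHermitian_diagonal_iff.2 fun _ => hb))).1 hcomm).isHermitian
  · rw [hcomm.mul_pow, pow_succ, pow_succ, mul_assoc, ← mul_assoc (A - scalar n a), hCH,
      zero_mul, mul_zero]

theorem sub_scalar_mul_sub_scalar_apply_of_ne [CommRing R] (A : Matrix n n R) (a b : R) {x y : n}
    (hxy : x ≠ y) :
    ((A - scalar n a) * (A - scalar n b)) x y = (A * A) x y - (a + b) * A x y := by
  have hexpand :
      (A - scalar n a) * (A - scalar n b) = A * A - (a + b) • A + scalar n (b * a) := by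
    simp only [scalar_apply, ← smul_one_eq_diagonal, sub_mul, mul_sub, Matrix.smul_mul,
      Matrix.mul_smul, one_mul, mul_one, smul_smul, add_smul]
    abel
  rw [hexpand]
  simp [scalar_apply, hxy]

theorem apply_mul_apply_eq_of_sub_scalar_mul_sub_scalar_eq_zero [CommRing R] [LinearOrder R]
    [IsStrictOrderedRing R] {A : Matrix n n R} (hdiag : ∀ i, A i i = 0)
    (hoff : ∀ i j, i ≠ j → A i j * A i j = 1)
    (h : (A - scalar n ((Fintype.card n : R) - 1)) * (A - scalar n (-1)) = 0)
    {x y w : n} (hxy : x ≠ y) (hwx : w ≠ x) (hwy : w ≠ y) : A x w * A w y = A x y := by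
  set s := (univ.erase x).erase y
  set t : n → R := fun w => A x w * A w y * A x y
  have hxy1 := hoff x y hxy
  have hws : w ∈ s := mem_erase.2 ⟨hwy, mem_erase.2 ⟨hwx, mem_univ w⟩⟩
  have hcard : (#s : R) = Fintype.card n - 2 := by
    rw [card_erase_of_mem (mem_erase.2 ⟨hxy.symm, mem_univ y⟩), card_erase_of_mem (mem_univ x),
      card_univ, Nat.sub_sub, Nat.cast_sub (?_ : 1 + 1 ≤ Fintype.card n)]
    · norm_num
    · exact Fintype.one_lt_card_iff.2 ⟨x, y, hxy⟩
  have hsum : ∑ w ∈ s, t w = ∑ _w ∈ s, 1 := by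
    have hentry := congr_fun (congr_fun h x) y
    rw [sub_scalar_mul_sub_scalar_apply_of_ne _ _ _ hxy, mul_apply, zero_apply] at hentry
    rw [sum_const, nsmul_one, hcard, sum_erase _ (by simp [t, hdiag]),
      sum_erase _ (by simp [t, hdiag]), ← sum_mul]
    linear_combination A x y * hentry + (Fintype.card n - 2 : R) * hxy1
  have htw : t w = 1 := by
    refine (sum_eq_sum_iff_of_le fun v hv => ?_).1 hsum w hws
    obtain ⟨hvy, hv⟩ := mem_erase.1 hv
    obtain ⟨hvx, -⟩ := mem_erase.1 hv
    have htv : t v * t v = 1 := by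
      simp only [t]
      linear_combination (A v y * A v y * A x y * A x y) * hoff x v hvx.symm +
        (A x y * A x y) * hoff v y hvy + hxy1
    nlinarith
  linear_combination A x y * htw - (A x w * A w y) * hxy1

end Matrix

noncomputable def kSigMaxMatrix [DecidableEq V] (G : SimpleGraph V) (sg : V → V → ℤ) :
    Matrix V V ℝ :=
  Matrix.of fun u v => if u = v then 0 else (kSigMax G sg u v : ℝ)

section KSigMaxMatrix

variable [DecidableEq V] {G : SimpleGraph V} {sg : V → V → ℤ}

theorem kSigMaxMatrix_isHermitian (hsym : ∀ u v, sg u v = sg v u) :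
    (kSigMaxMatrix G sg).IsHermitian :=
  Matrix.IsHermitian.ext fun u v => by
    simp [kSigMaxMatrix, eq_comm, kSigMax_comm hsym u v]

theorem kSigMaxMatrix_eq_vecMulVec_sub_one {θ : V → ℤ} (hθ : ∀ x, θ x * θ x = 1)
    (hkSig : ∀ u v, kSigMax G sg u v = θ u * θ v) :
    kSigMaxMatrix G sg = Matrix.vecMulVec (fun v => (θ v : ℝ)) (fun v => (θ v : ℝ)) - 1 := by
  ext u v
  rcases eq_or_ne u v with rfl | huv
  · simp [kSigMaxMatrix, Matrix.vecMulVec_apply, ← Int.cast_mul, hθ]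
  · simp [kSigMaxMatrix, Matrix.vecMulVec_apply, huv, hkSig]

variable [Fintype V]

theorem SBalanced.charpoly_kSigMaxMatrix (hb : SBalanced G sg) (hconn : G.Connected)
    (hsym : ∀ u v, sg u v = sg v u) (hval : ∀ u v, G.Adj u v → IsUnit (sg u v)) :
    (kSigMaxMatrix G sg).charpoly =
      (X - C ((Fintype.card V : ℝ) - 1)) * (X + C 1) ^ (Fintype.card V - 1) := by
  obtain ⟨θ, hθ, hwalk⟩ := hb.exists_switching hsym hval hconn
  have : Nonempty V := hconn.nonempty
  have hdot : (fun v => (θ v : ℝ)) ⬝ᵥ (fun v => (θ v : ℝ)) = Fintype.card V := by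
    simp [dotProduct, ← Int.cast_mul, hθ]
  rw [kSigMaxMatrix_eq_vecMulVec_sub_one hθ
    (kSigMax_eq_mul_of_forall_walkSign_eq hconn hθ hwalk), Matrix.charpoly_vecMulVec_sub_one, hdot]

theorem sBalanced_of_charpoly_kSigMaxMatrix (hsym : ∀ u v, sg u v = sg v u)
    (hval : ∀ u v, G.Adj u v → IsUnit (sg u v))
    (hchar : (kSigMaxMatrix G sg).charpoly =
      (X - C ((Fintype.card V : ℝ) - 1)) * (X + C 1) ^ (Fintype.card V - 1)) :
    SBalanced G sg := by
  intro u p _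
  have : Nonempty V := ⟨u⟩
  have hquad := (kSigMaxMatrix_isHermitian hsym).sub_scalar_mul_sub_scalar_eq_zero
    (a := (Fintype.card V : ℝ) - 1) (b := -1) (.all _) (.all _)
    (hchar.trans (by rw [map_neg, sub_neg_eq_add]))
  have hsq : ∀ x y, x ≠ y → kSigMax G sg x y * kSigMax G sg x y = 1 :=
    fun x y _ => Int.isUnit_mul_self (isUnit_kSigMax hval x y)
  have htri : ∀ x y w, x ≠ y → w ≠ x → w ≠ y →
      kSigMax G sg x w * kSigMax G sg w y = kSigMax G sg x y := by
    intro x y w hxy hwx hwy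
    have hM := Matrix.apply_mul_apply_eq_of_sub_scalar_mul_sub_scalar_eq_zero
      (by simp [kSigMaxMatrix]) (fun i j hij => by
        simp only [kSigMaxMatrix, Matrix.of_apply, if_neg hij]
        exact_mod_cast hsq i j hij) hquad hxy hwx hwy
    simp only [kSigMaxMatrix, Matrix.of_apply, if_neg hxy, if_neg hwy, if_neg hwx.symm] at hM
    exact_mod_cast hM
  obtain ⟨θ, hθ, hkθ⟩ := exists_switching_of_triangle (kSigMax_comm hsym) hsq htri
  refine (walkSign_eq_mul_of_forall_adj hθ (fun x y h => ?_) p).trans (hθ u)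
  simpa [kSigMax, h] using hkθ x y h.ne

end KSigMaxMatrix

theorem balanced_iff_spectrum {V : Type*} [Fintype V] (G : SimpleGraph V) (sg : V → V → ℤ)
    (hconn : G.Connected) (hsym : ∀ u v, sg u v = sg v u)
    (hval : ∀ u v, G.Adj u v → sg u v = 1 ∨ sg u v = -1) [DecidableEq V] :
    SBalanced G sg ↔
      ((∀ u v : V, sigmaMax G sg u v = sigmaMin G sg u v) ∧
        ((Matrix.of fun u v : V => if u = v then (0 : ℝ) else (kSigMax G sg u v : ℝ)).charpoly =
      (X - C ((Fintype.card V : ℝ) - 1)) * (X + C 1) ^ (Fintype.card V - 1))) := by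
  have hval' : ∀ u v, G.Adj u v → IsUnit (sg u v) := fun u v h => Int.isUnit_iff.2 (hval u v h)
  exact ⟨fun hb => ⟨hb.sigmaMax_eq_sigmaMin hconn hsym hval',
      hb.charpoly_kSigMaxMatrix hconn hsym hval'⟩,
    fun h => sBalanced_of_charpoly_kSigMaxMatrix hsym hval' h.2⟩
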